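/- Inversion formula for continuous big q-Hermite polynomials: with x = cos θ, (a e^{iθ};q)_n (a e^{−iθ};q)_n = ∏_{k=0}^{n−1}(1 − 2 a q^k x + a^2 q^{2k}) = ∑_{m=0}^{n} (−a)^m [n choose m]_q q^{m(m−1)/2} H_m(x; a | q), where H_m(x;a|q) = a^{−m} {}_3φ_2(q^{−m}, a e^{iθ}, a e^{−iθ}; 0, 0; q; q); the identity holds as polynomials in x. -/

import Mathlib

open Finset

/-- q-shifted factorial. -/
noncomputable def qPoch (a q : ℂ) (n : ℕ) : ℂ :=
  ∏ k ∈ Finset.range n, (1 - a * q ^ k)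

/-- Gaussian (q-binomial) coefficient. -/
noncomputable def qBinom (q : ℂ) (n k : ℕ) : ℂ :=
  qPoch q q n / (qPoch q q k * qPoch q q (n - k))

/-- `(a e^{iθ};q)_j (a e^{−iθ};q)_j = ∏_{k<j} (1 − 2aq^k x + a²q^{2k})` with `x = cos θ`. -/
noncomputable def qPochPair (q a x : ℂ) (j : ℕ) : ℂ :=
  ∏ k ∈ Finset.range j, (1 - 2 * a * q ^ k * x + a ^ 2 * q ^ (2 * k))

/-- Continuous big q-Hermite polynomial
`H_m(x;a|q) = a^{−m} {}_3φ_2(q^{−m},ae^{iθ},ae^{−iθ};0,0;q;q)`, `x = cos θ`. -/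
noncomputable def bigQHermite (q a x : ℂ) (m : ℕ) : ℂ :=
  (a ^ m)⁻¹ * ∑ j ∈ Finset.range (m + 1),
    qPoch ((q ^ m)⁻¹) q j / qPoch q q j * q ^ j * qPochPair q a x j

lemma qPoch_succ (a q : ℂ) (n : ℕ) : qPoch a q (n+1) = qPoch a q n * (1 - a * q ^ n) :=
  Finset.prod_range_succ _ _

lemma qPoch_zero (a q : ℂ) : qPoch a q 0 = 1 := rfl

lemma choose_two_succ (s : ℕ) : (s+1).choose 2 = s.choose 2 + s := by
  rw [Nat.choose_succ_succ]
  simp [Nat.choose_one_right, Nat.add_comm]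

lemma two_mul_choose_two (j : ℕ) : 2 * j.choose 2 = j * (j-1) := by
  induction j with
  | zero => rfl
  | succ s ih =>
    rw [choose_two_succ]
    rcases s with _ | t
    · rfl
    · simp only [Nat.add_sub_cancel] at ih ⊢
      nlinarith [ih]

lemma choose_two_add (j r : ℕ) : (j + r).choose 2 = j.choose 2 + r.choose 2 + j * r := by
  induction r with
  | zero => simp
  | succ s ih => rw [← Nat.add_assoc, choose_two_succ, choose_two_succ, ih]; ring

lemma qPoch_q_ne_zero {q : ℂ} {n : ℕ} (hq1 : ∀ j, 1 ≤ j → j ≤ n → q ^ j ≠ 1)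
    {m : ℕ} (hm : m ≤ n) : qPoch q q m ≠ 0 := by
  unfold qPoch
  apply Finset.prod_ne_zero_iff.2
  intro k hk
  rw [Finset.mem_range] at hk
  have : q * q ^ k = q ^ (k+1) := by ring
  rw [this]
  intro h
  exact hq1 (k+1) (by omega) (by omega) (sub_eq_zero.mp h).symm

noncomputable def Rprod (q : ℂ) (m j : ℕ) : ℂ := ∏ k ∈ Finset.range j, (1 - q ^ (m - k))

lemma qPoch_inv_pow {q : ℂ} (hq0 : q ≠ 0) {m j : ℕ} (hj : j ≤ m) :
    qPoch ((q ^ m)⁻¹) q j = (-1)^j * q ^ (j.choose 2) * (q ^ (m * j))⁻¹ * Rprod q m j := by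
  induction j with
  | zero => simp [qPoch_zero, Rprod]
  | succ s ih =>
    have hs : s ≤ m := by omega
    have h1 : q ^ s * q ^ (m - s) = q ^ m := by rw [← pow_add]; congr 1; omega
    have hstep : (1 - (q^m)⁻¹ * q^s) = -((q^m)⁻¹) * q^s * (1 - q^(m-s)) := by
      field_simp
      linear_combination -h1
    rw [qPoch_succ, ih hs, hstep]
    have h2 : Rprod q m (s+1) = Rprod q m s * (1 - q^(m-s)) := Finset.prod_range_succ _ _
    have h3 : q ^ ((s+1).choose 2) = q ^ (s.choose 2) * q ^ s := by
      rw [choose_two_succ, pow_add]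
    have h4 : (q ^ (m*(s+1)))⁻¹ = (q ^ (m*s))⁻¹ * (q^m)⁻¹ := by
      rw [Nat.mul_succ, pow_add, mul_inv]
    rw [h2, h3, h4]
    ring

lemma Rprod_mul (q : ℂ) {m j : ℕ} (hj : j ≤ m) :
    Rprod q m j * qPoch q q (m - j) = qPoch q q m := by
  induction j with
  | zero => simp [Rprod]
  | succ s ih =>
    have hs : s ≤ m := by omega
    have h2 : Rprod q m (s+1) = Rprod q m s * (1 - q^(m-s)) := Finset.prod_range_succ _ _
    have h3 : qPoch q q (m - s) = qPoch q q (m - (s+1)) * (1 - q * q ^ (m - (s+1))) := by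
      have : m - s = (m - (s+1)) + 1 := by omega
      rw [this, qPoch_succ]
    have h4 : q * q ^ (m - (s+1)) = q ^ (m - s) := by
      rw [← pow_succ']; congr 1; omega
    rw [h2, ← ih hs, h3, h4]
    ring

lemma qBinom_zero {q : ℂ} {N : ℕ} (h : qPoch q q N ≠ 0) : qBinom q N 0 = 1 := by
  unfold qBinom
  simp only [Nat.sub_zero]
  rw [show qPoch q q 0 = 1 from rfl]
  field_simp

lemma qBinom_self {q : ℂ} {N : ℕ} (h : qPoch q q N ≠ 0) : qBinom q N N = 1 := by
  unfold qBinom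
  simp only [Nat.sub_self]
  rw [show qPoch q q 0 = 1 from rfl]
  field_simp

lemma qBinom_pascal {q : ℂ} {N r : ℕ} (hr : r < N)
    (h1 : qPoch q q r ≠ 0) (h2 : qPoch q q (r+1) ≠ 0)
    (h3 : qPoch q q (N-r) ≠ 0) (h4 : qPoch q q (N-r-1) ≠ 0) :
    qBinom q (N+1) (r+1) = qBinom q N r + q^(r+1) * qBinom q N (r+1) := by
  have e1 : (N+1) - (r+1) = N - r := by omega
  have e2 : N - (r+1) = N - r - 1 := by omega
  have hA : qPoch q q (N+1) = qPoch q q N * (1 - q * q ^ N) := qPoch_succ _ _ _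
  have hB : qPoch q q (r+1) = qPoch q q r * (1 - q * q ^ r) := qPoch_succ _ _ _
  have hC : qPoch q q (N-r) = qPoch q q (N-r-1) * (1 - q * q ^ (N-r-1)) := by
    have : N - r = (N - r - 1) + 1 := by omega
    rw [this, qPoch_succ]; rw [← this]
  have hpow : (q * q ^ r) * (q * q ^ (N-r-1)) = q * q ^ N := by
    rw [show q * q ^ r = q ^ (r+1) by ring, show q * q ^ (N-r-1) = q ^ (N-r) by rw [← pow_succ']; congr 1; omega,
      ← pow_add, show q * q ^ N = q ^ (N+1) by ring]
    congr 1; omega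
  rw [show qPoch q q N * (1 - q * q ^ N) = qPoch q q N * (1 - q^2 * q^r * q^(N-r-1)) by
    rw [show q^2 * q^r * q^(N-r-1) = (q * q^r) * (q * q^(N-r-1)) by ring, hpow]] at hA
  unfold qBinom
  rw [e1, e2, hA, hC, hB]
  have h4' : (1 - q * q ^ (N-r-1)) ≠ 0 := by
    intro h; rw [hC, h, mul_zero] at h3; exact h3 rfl
  have h2' : (1 - q * q ^ r) ≠ 0 := by
    intro h; rw [hB, h, mul_zero] at h2; exact h2 rfl
  field_simp
  ring

lemma qBinom_alt_sum {q : ℂ} {n N : ℕ} (hq1 : ∀ j, 1 ≤ j → j ≤ n → q ^ j ≠ 1)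
    (hN : N + 1 ≤ n) :
    ∑ r ∈ Finset.range (N+2), (-1:ℂ)^r * q^(r.choose 2) * qBinom q (N+1) r = 0 := by
  have hD : ∀ k, k ≤ n → qPoch q q k ≠ 0 := fun k hk => qPoch_q_ne_zero hq1 hk
  set g : ℕ → ℂ := fun t => (-1:ℂ)^t * q^(t.choose 2 + t) * qBinom q N t with hg
  rw [Finset.sum_range_succ', Finset.sum_range_succ]
  have hmid : ∀ s ∈ Finset.range N,
      (-1:ℂ)^(s+1) * q^((s+1).choose 2) * qBinom q (N+1) (s+1) = g (s+1) - g s := by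
    intro s hs
    rw [Finset.mem_range] at hs
    rw [qBinom_pascal hs (hD s (by omega)) (hD (s+1) (by omega))
      (hD (N-s) (by omega)) (hD (N-s-1) (by omega))]
    simp only [hg]
    rw [choose_two_succ]
    rw [show s.choose 2 + s + (s+1) = (s.choose 2 + s) + (s+1) from rfl, pow_add, pow_add]
    ring
  rw [Finset.sum_congr rfl hmid, Finset.sum_range_sub]
  simp only [hg]
  rw [qBinom_zero (hD N (by omega)), qBinom_self (hD N (by omega)),
    qBinom_zero (hD (N+1) (by omega)), qBinom_self (hD (N+1) (by omega))]
  rw [show (N+1).choose 2 = N.choose 2 + N from choose_two_succ N]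
  ring

lemma choose_exp_eq (j r : ℕ) : (j+r).choose 2 + j.choose 2 + j = r.choose 2 + (j+r)*j := by
  have h1 := choose_two_add j r
  cases j with
  | zero => simp [h1]
  | succ t =>
    have h2' : 2 * (t+1).choose 2 = (t+1) * t := by
      simpa using two_mul_choose_two (t+1)
    rw [h1]
    zify at h2' ⊢
    linear_combination h2'


/-- inversion for continuous big q-Hermite polynomials:
`∏_{k<n}(1 − 2aq^k x + a²q^{2k}) = ∑_m (−a)^m [n choose m]_q q^{m(m−1)/2} H_m(x;a|q)`. -/
theorem bigQHermite_inversion (q a : ℂ) (n : ℕ)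
    (hq0 : q ≠ 0) (hq1 : ∀ j, 1 ≤ j → j ≤ n → q ^ j ≠ 1) (ha : a ≠ 0) (x : ℂ) :
    qPochPair q a x n = ∑ m ∈ Finset.range (n + 1),
      (-a) ^ m * qBinom q n m * q ^ (m * (m - 1) / 2) * bigQHermite q a x m := by
  have hD : ∀ k, k ≤ n → qPoch q q k ≠ 0 := fun k hk => qPoch_q_ne_zero hq1 hk
  set c : ℕ → ℕ → ℂ := fun m j => (-1:ℂ)^m * qBinom q n m * q^(m.choose 2) *
      ((-1:ℂ)^j * q^(j.choose 2) * (q^(m*j))⁻¹ * Rprod q m j / qPoch q q j * q^j) with hc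
  have step1 : ∀ m ∈ Finset.range (n+1),
      (-a) ^ m * qBinom q n m * q ^ (m * (m - 1) / 2) * bigQHermite q a x m
      = ∑ j ∈ Finset.range (m+1), c m j * qPochPair q a x j := by
    intro m hm
    unfold bigQHermite
    rw [Finset.mul_sum, Finset.mul_sum]
    refine Finset.sum_congr rfl fun j hj => ?_
    rw [Finset.mem_range] at hj
    rw [qPoch_inv_pow hq0 (by omega : j ≤ m)]
    simp only [hc]
    rw [show m * (m-1) / 2 = m.choose 2 from (Nat.choose_two_right m).symm]
    rw [neg_pow a m]
    have ham : a ^ m * a⁻¹ ^ m = 1 := by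
      rw [inv_pow]; exact mul_inv_cancel₀ (pow_ne_zero m ha)
    field_simp
  rw [Finset.sum_congr rfl step1]
  have swap : ∑ m ∈ Finset.range (n+1), ∑ j ∈ Finset.range (m+1), c m j * qPochPair q a x j
      = ∑ j ∈ Finset.range (n+1), ∑ m ∈ Finset.Ico j (n+1), c m j * qPochPair q a x j := by
    simp only [Finset.range_eq_Ico]
    exact (Finset.sum_Ico_Ico_comm 0 (n+1) (fun i j => c j i * qPochPair q a x i)).symm
  rw [swap]
  have step3 : ∀ j ∈ Finset.range (n+1),
      ∑ m ∈ Finset.Ico j (n+1), c m j * qPochPair q a x j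
      = (if j = n then (1:ℂ) else 0) * qPochPair q a x j := by
    intro j hj
    rw [Finset.mem_range] at hj
    have hjn : j ≤ n := by omega
    rw [← Finset.sum_mul]
    congr 1
    rw [Finset.sum_Ico_eq_sum_range]
    have key : ∀ r ∈ Finset.range (n+1-j), c (j+r) j
        = (qPoch q q n / (qPoch q q j * qPoch q q (n-j)))
          * ((-1:ℂ)^r * q^(r.choose 2) * qBinom q (n-j) r) := by
      intro r hr
      rw [Finset.mem_range] at hr
      simp only [hc]
      have hDr := hD r (by omega)
      have hR2 : Rprod q (j+r) j = qPoch q q (j+r) / qPoch q q r := by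
        have h := Rprod_mul q (show j ≤ j + r by omega)
        rw [show j + r - j = r by omega] at h
        field_simp [← h]
        exact h
      unfold qBinom
      rw [show n - (j+r) = n - j - r by omega, hR2]
      have hpowE : q^((j+r).choose 2 + (j.choose 2 + j))
          = q^(r.choose 2 + (j+r)*j) := by
        congr 1
        have := choose_exp_eq j r
        omega
      have hq2 : (q:ℂ)^((j+r)*j) ≠ 0 := pow_ne_zero _ hq0
      have hDj := hD j hjn
      have hDjr := hD (j+r) (by omega)
      have hDnj := hD (n-j) (by omega)
      have hDnjr := hD (n-j-r) (by omega)
      have hs : (-1:ℂ)^(j+r) * (-1:ℂ)^j = (-1:ℂ)^r := by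
        rw [← pow_add, show j+r+j = r + 2*j by omega, pow_add, pow_mul]
        norm_num
      field_simp
      linear_combination ((-1:ℂ)^(j+r) * (-1:ℂ)^j * qPoch q q n) * hpowE
        + (qPoch q q n * q^(r.choose 2 + (j+r)*j)) * hs
    rw [Finset.sum_congr rfl key, ← Finset.mul_sum]
    by_cases hj' : j = n
    · rw [if_pos hj', hj', show n + 1 - n = 1 by omega, Finset.sum_range_one]
      have h00 : qBinom q (n - n) 0 = 1 := by
        rw [Nat.sub_self]
        exact qBinom_zero (by simp [qPoch_zero])
      rw [h00, Nat.sub_self]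
      simp only [pow_zero, Nat.choose_zero_right]
      rw [show qPoch q q 0 = 1 from rfl]
      field_simp [hD n (le_refl n)]
      simp
    · rw [if_neg hj']
      have h1 : n - j = (n-j-1) + 1 := by omega
      have hsum : ∑ r ∈ Finset.range (n+1-j), (-1:ℂ)^r * q^(r.choose 2) * qBinom q (n-j) r = 0 := by
        rw [show n + 1 - j = (n-j-1) + 2 by omega]
        rw [show n - j = (n-j-1) + 1 from h1] 
        exact qBinom_alt_sum hq1 (by omega)
      rw [hsum, mul_zero]
  rw [Finset.sum_congr rfl step3]
  rw [Finset.sum_congr rfl (fun j _ => (ite_mul (j = n) (1:ℂ) 0 (qPochPair q a x j)).trans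
    (by rw [one_mul, zero_mul]))]
  rw [Finset.sum_ite_eq' (Finset.range (n+1)) n (fun j => qPochPair q a x j)]
  rw [if_pos (Finset.mem_range.2 (by omega))]
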